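/- arXiv:2512.09881 — 9 statements merged into one kernel-verified Lean document; each statement's English description precedes it below -/
import Mathlib

section
/- Inductive left constellations are precisely the locally inductive left constellations in which the corestriction x|e exists for every element x and every e ∈ T⁺. -/
/-- A "pre-constellation": carrier with definedness predicate `D`, partial
multiplication `mul`, unary `plus`, a partial order `le`, a restriction
operation `res` (so `res e x` is `e|x`), a corestriction-existence predicate
`coE` and corestriction operation `cor` (so `cor x e` is `x|e`). -/
structure PreConst (T : Type*) where
  D : T → T → Prop
  mul : T → T → T
  plus : T → T
  le : T → T → Prop
  res : T → T → T
  coE : T → T → Prop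
  cor : T → T → T

/-- `e ∈ T⁺`. -/
def PreConst.isPlus {T : Type*} (P : PreConst T) (e : T) : Prop := ∃ x, e = P.plus x

/-- Two elements are in the same connected component of the poset `(T⁺, ≤)`. -/
def PreConst.connected {T : Type*} (P : PreConst T) : T → T → Prop :=
  Relation.ReflTransGen (fun a b => P.isPlus a ∧ P.isPlus b ∧ (P.le a b ∨ P.le b a))

/-- The pseudo-product `x ⊗ y = (x|y⁺)y`. -/
def PreConst.pprod {T : Type*} (P : PreConst T) (x y : T) : T :=
  P.mul (P.cor x (P.plus y)) y

/-- `P` is a left constellation (axioms (c1)-(c4)). -/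
structure IsConst {T : Type*} (P : PreConst T) : Prop where
  c1 : ∀ x y z, (P.D x y ∧ P.D y z) ↔ (P.D y z ∧ P.D x (P.mul y z))
  c2 : ∀ x y z, P.D x y → P.D y z →
    P.D (P.mul x y) z ∧ P.mul x (P.mul y z) = P.mul (P.mul x y) z
  c3 : ∀ e x, P.isPlus e → ((P.D e x ∧ P.mul e x = x) ↔ e = P.plus x)
  c4 : ∀ e x, P.isPlus e → P.D x e → P.mul x e = x

/-- `P` is a locally inductive left constellation (li-constellation):
a left constellation with a partial order satisfying (wo1)-(wo9). -/
structure IsLiC {T : Type*} (P : PreConst T) extends IsConst P : Prop where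
  le_refl : ∀ x, P.le x x
  le_trans : ∀ x y z, P.le x y → P.le y z → P.le x z
  le_antisymm : ∀ x y, P.le x y → P.le y x → x = y
  wo1 : ∀ x y x' y', P.le x y → P.le x' y' → P.D x x' → P.D y y' →
    P.le (P.mul x x') (P.mul y y')
  wo2 : ∀ x y, P.le x y → P.le (P.plus x) (P.plus y)
  wo3 : ∀ e x, P.isPlus e → P.le e (P.plus x) →
    P.le (P.res e x) x ∧ P.plus (P.res e x) = e ∧
      ∀ r, P.le r x → P.plus r = e → r = P.res e x
  wo4 : ∀ x e, P.isPlus e →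
    (P.coE x e ↔ ∃ y, P.le y x ∧ P.D y e) ∧
    (P.coE x e → P.le (P.cor x e) x ∧ P.D (P.cor x e) e ∧
      ∀ y, P.le y x → P.D y e → P.le y (P.cor x e))
  wo5 : ∀ x y e, P.isPlus e → P.D x y → (P.coE (P.mul x y) e ↔ P.coE y e)
  wo6 : ∀ x e f, P.isPlus e → P.isPlus f → P.le f e → (P.coE x e ↔ P.coE x f)
  wo7 : ∀ x y e, P.isPlus e → P.D x y → P.coE (P.mul x y) e →
    P.plus (P.cor (P.mul x y) e) = P.plus (P.cor x (P.plus (P.cor y e)))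
  wo8 : ∀ e f, P.isPlus e → P.isPlus f → P.le e f →
    P.coE e f ∧ P.cor e f = P.res e f
  wo9a : ∀ e f, P.isPlus e → P.isPlus f → P.connected e f → P.coE e f
  wo9b : ∀ e f, P.isPlus e → P.isPlus f → P.coE e f →
    P.isPlus (P.cor e f) ∧ P.le (P.cor e f) e ∧ P.le (P.cor e f) f ∧
      ∀ g, P.isPlus g → P.le g e → P.le g f → P.le g (P.cor e f)

/-- `P` is an inductive left constellation in the sense of Gould-Hollings:
a left constellation with a partial order satisfying (O1)-(O7); in particular
the corestriction `x|e` exists for all `x` and `e ∈ T⁺`, and `(T⁺,≤)` is a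
meet-semilattice with meet given by corestriction. -/
structure IsInductive {T : Type*} (P : PreConst T) extends IsConst P : Prop where
  le_refl : ∀ x, P.le x x
  le_trans : ∀ x y z, P.le x y → P.le y z → P.le x z
  le_antisymm : ∀ x y, P.le x y → P.le y x → x = y
  o1 : ∀ x y x' y', P.le x y → P.le x' y' → P.D x x' → P.D y y' →
    P.le (P.mul x x') (P.mul y y')
  o2 : ∀ x y, P.le x y → P.le (P.plus x) (P.plus y)
  o3 : ∀ e x, P.isPlus e → P.le e (P.plus x) →
    P.le (P.res e x) x ∧ P.plus (P.res e x) = e ∧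
      ∀ r, P.le r x → P.plus r = e → r = P.res e x
  o4 : ∀ x e, P.isPlus e → P.coE x e ∧ P.le (P.cor x e) x ∧ P.D (P.cor x e) e ∧
      ∀ y, P.le y x → P.D y e → P.le y (P.cor x e)
  o5 : ∀ x y e, P.isPlus e → P.D x y →
    P.plus (P.cor (P.mul x y) e) = P.plus (P.cor x (P.plus (P.cor y e)))
  o6 : ∀ e f, P.isPlus e → P.isPlus f → P.le e f → P.cor e f = P.res e f
  o7 : ∀ e f, P.isPlus e → P.isPlus f →
    P.isPlus (P.cor e f) ∧ P.le (P.cor e f) e ∧ P.le (P.cor e f) f ∧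
      ∀ g, P.isPlus g → P.le g e → P.le g f → P.le g (P.cor e f)

/-- Inductive left constellations are precisely the li-constellations in which
the corestriction `x|e` exists for every `x` and every `e ∈ T⁺`. -/
theorem stmt6 {T : Type*} (P : PreConst T) :
    IsInductive P ↔ (IsLiC P ∧ ∀ x e, P.isPlus e → P.coE x e) := by
  constructor
  · intro h
    refine ⟨⟨h.toIsConst, h.le_refl, h.le_trans, h.le_antisymm, h.o1, h.o2, h.o3,
      ?_, ?_, ?_, ?_, ?_, ?_, ?_⟩, fun x e he => (h.o4 x e he).1⟩
    · intro x e he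
      obtain ⟨hc, hle, hd, hmax⟩ := h.o4 x e he
      exact ⟨⟨fun _ => ⟨P.cor x e, hle, hd⟩, fun _ => hc⟩, fun _ => ⟨hle, hd, hmax⟩⟩
    · intro x y e he _
      exact ⟨fun _ => (h.o4 y e he).1, fun _ => (h.o4 (P.mul x y) e he).1⟩
    · intro x e f he hf _
      exact ⟨fun _ => (h.o4 x f hf).1, fun _ => (h.o4 x e he).1⟩
    · intro x y e he hd _
      exact h.o5 x y e he hd
    · intro e f he hf hle
      exact ⟨(h.o4 e f hf).1, h.o6 e f he hf hle⟩
    · intro e f he hf _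
      exact (h.o4 e f hf).1
    · intro e f he hf _
      exact h.o7 e f he hf
  · rintro ⟨h, hall⟩
    refine ⟨h.toIsConst, h.le_refl, h.le_trans, h.le_antisymm, h.wo1, h.wo2, h.wo3,
      ?_, ?_, ?_, ?_⟩
    · intro x e he
      obtain ⟨hle, hd, hmax⟩ := (h.wo4 x e he).2 (hall x e he)
      exact ⟨hall x e he, hle, hd, hmax⟩
    · intro x y e he hd
      exact h.wo7 x y e he hd (hall (P.mul x y) e he)
    · intro e f he hf hle
      exact (h.wo8 e f he hf hle).2
    · intro e f he hf
      exact h.wo9b e f he hf (hall e f hf)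
end

section
/- In an li-constellation T, if e ≤ x⁺ with e ∈ T⁺, then ex is defined and the restriction e|x equals ex. In particular, if x ≤ y, then x⁺y is defined and x = x⁺y. -/
/-- In an li-constellation, if `e ∈ T⁺` and `e ≤ x⁺` then `ex` is defined and the
restriction `e|x` equals `ex`; in particular, if `x ≤ y` then `x⁺y` is defined
and `x = x⁺y`. -/
theorem stmt8 {T : Type*} (P : PreConst T) (h : IsLiC P) :
    (∀ e x, P.isPlus e → P.le e (P.plus x) → P.D e x ∧ P.res e x = P.mul e x) ∧
    (∀ x y, P.le x y → P.D (P.plus x) y ∧ x = P.mul (P.plus x) y) := by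
  -- `plus e = e` for `e ∈ T⁺`
  have hplusE : ∀ e, P.isPlus e → P.plus e = e := by
    intro e he
    have h1 := (h.c3 (P.plus e) e ⟨e, rfl⟩).mpr rfl
    have h2 := h.c4 e (P.plus e) he h1.1
    exact h2.symm.trans h1.2
  -- if `e ≤ f` in `T⁺` then `D e f` and `e f = e`
  have hef : ∀ e f, P.isPlus e → P.isPlus f → P.le e f → P.D e f ∧ P.mul e f = e := by
    intro e f he hf hle
    have hfe : P.le e (P.plus f) := by rw [hplusE f hf]; exact hle
    have hw8 := h.wo8 e f he hf hle
    have hw3 := h.wo3 e f he hfe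
    have hw9 := h.wo9b e f he hf hw8.1
    have hres_plus : P.isPlus (P.res e f) := hw8.2 ▸ hw9.1
    have hres_eq : P.res e f = e := by
      have h1 := hplusE _ hres_plus
      rw [hw3.2.1] at h1; exact h1.symm
    have hD : P.D e f := by
      have h2 := ((h.wo4 e f hf).2 hw8.1).2.1
      rwa [hw8.2, hres_eq] at h2
    exact ⟨hD, h.c4 f e hf hD⟩
  have part1 : ∀ e x, P.isPlus e → P.le e (P.plus x) →
      P.D e x ∧ P.res e x = P.mul e x := by
    intro e x he hle
    have hpx := (h.c3 (P.plus x) x ⟨x, rfl⟩).mpr rfl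
    have hef' := hef e (P.plus x) he ⟨x, rfl⟩ hle
    have hDex : P.D e x := by
      have hc1 := (h.c1 e (P.plus x) x).mp ⟨hef'.1, hpx.1⟩
      rw [hpx.2] at hc1; exact hc1.2
    have hle2 : P.le (P.mul e x) x := by
      have h3 := h.wo1 e (P.plus x) x x hle (h.le_refl x) hDex hpx.1
      rwa [hpx.2] at h3
    -- `D e e` and `e e = e`
    have hee := (h.c3 e e he).mpr (hplusE e he).symm
    have hDeex : P.D e (P.mul e x) := ((h.c1 e e x).mp ⟨hee.1, hDex⟩).2
    have heex : P.mul e (P.mul e x) = P.mul e x := by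
      have h4 := h.c2 e e x hee.1 hDex
      rw [h4.2, hee.2]
    have hplus_ex : e = P.plus (P.mul e x) := (h.c3 e (P.mul e x) he).mp ⟨hDeex, heex⟩
    have hw3 := h.wo3 e x he hle
    exact ⟨hDex, (hw3.2.2 (P.mul e x) hle2 hplus_ex.symm).symm⟩
  refine ⟨part1, ?_⟩
  intro x y hxy
  have hp := h.wo2 x y hxy
  have hp1 := part1 (P.plus x) y ⟨x, rfl⟩ hp
  refine ⟨hp1.1, ?_⟩
  have hw3 := h.wo3 (P.plus x) y ⟨x, rfl⟩ hp
  have hx := hw3.2.2 x hxy rfl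
  exact hx.trans hp1.2
end

section
/- In an li-constellation T: (a) xy is defined if and only if the corestriction x|y⁺ exists and equals x; (b) if e ≤ f in T⁺ and x|e exists, then x|e ≤ x|f; (c) if e ≤ f in T⁺ and x|f exists, then (x|f)|e exists and equals x|e. -/
/-- In an li-constellation: (a) `xy` is defined iff the corestriction `x|y⁺`
exists and equals `x`; (b) if `e ≤ f` in `T⁺` and `x|e` exists then `x|f`
exists and `x|e ≤ x|f`; (c) if `e ≤ f` in `T⁺` and `x|f` exists then `(x|f)|e`
exists and equals `x|e`. -/
theorem stmt9 {T : Type*} (P : PreConst T) (h : IsLiC P) :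
    (∀ x y, P.D x y ↔ (P.coE x (P.plus y) ∧ P.cor x (P.plus y) = x)) ∧
    (∀ x e f, P.isPlus e → P.isPlus f → P.le e f → P.coE x e →
      P.coE x f ∧ P.le (P.cor x e) (P.cor x f)) ∧
    (∀ x e f, P.isPlus e → P.isPlus f → P.le e f → P.coE x f →
      P.coE (P.cor x f) e ∧ P.cor (P.cor x f) e = P.cor x e) := by
  -- Basic facts
  have hA : ∀ x, P.D (P.plus x) x ∧ P.mul (P.plus x) x = x := by
    intro x
    exact ((h.c3 (P.plus x) x ⟨x, rfl⟩).mpr rfl)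
  have hplus_idem : ∀ x, P.plus (P.plus x) = P.plus x := by
    intro x
    set e := P.plus x with he
    obtain ⟨hDex, hEex⟩ := hA x
    obtain ⟨hDpe, hEpe⟩ := hA e
    have hD : P.D (P.plus e) x := by
      have := (h.c1 (P.plus e) e x).mp ⟨hDpe, hDex⟩
      rw [hEex] at this
      exact this.2
    have hE : P.mul (P.plus e) x = x := by
      have := (h.c2 (P.plus e) e x hDpe hDex).2
      rw [hEex, hEpe] at this
      rw [this, hEex]
    exact ((h.c3 (P.plus e) x ⟨e, rfl⟩).mp ⟨hD, hE⟩).trans he.symm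
  have hplus_fix : ∀ e, P.isPlus e → P.plus e = e := by
    rintro e ⟨x, rfl⟩; exact hplus_idem x
  -- D x y ↔ D x (plus y)
  have hDplus : ∀ x y, P.D x y ↔ P.D x (P.plus y) := by
    intro x y
    obtain ⟨hDpy, hEpy⟩ := hA y
    constructor
    · intro hxy
      have := (h.c1 x (P.plus y) y).mpr ⟨hDpy, by rw [hEpy]; exact hxy⟩
      exact this.1
    · intro hxp
      have := (h.c1 x (P.plus y) y).mp ⟨hxp, hDpy⟩
      rw [hEpy] at this
      exact this.2
  -- if e ≤ f in T⁺ then D e f and e*f = e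
  have hef : ∀ e f, P.isPlus e → P.isPlus f → P.le e f → P.D e f ∧ P.mul e f = e := by
    intro e f he hf hle
    have hpf : P.plus f = f := hplus_fix f hf
    have hlef : P.le e (P.plus f) := by rw [hpf]; exact hle
    obtain ⟨_, _, huniq⟩ := h.wo3 e f he hlef
    have hres : e = P.res e f := huniq e hle (hplus_fix e he)
    obtain ⟨hcoE, hcor⟩ := h.wo8 e f he hf hle
    have hD := ((h.wo4 e f hf).2 hcoE).2.1
    rw [hcor, ← hres] at hD
    exact ⟨hD, h.c4 f e hf hD⟩
  -- if D z e, e ≤ f in T⁺, then D z f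
  have hDmono : ∀ z e f, P.isPlus e → P.isPlus f → P.le e f → P.D z e → P.D z f := by
    intro z e f he hf hle hze
    obtain ⟨hDef, _⟩ := hef e f he hf hle
    have := (h.c2 z e f hze hDef).1
    rwa [h.c4 e z he hze] at this
  -- part (b) core
  have partb : ∀ x e f, P.isPlus e → P.isPlus f → P.le e f → P.coE x e →
      P.coE x f ∧ P.le (P.cor x e) (P.cor x f) := by
    intro x e f he hf hle hcoE
    have hcoEf : P.coE x f := (h.wo6 x f e hf he hle).mpr hcoE
    obtain ⟨hlex, hDe, _⟩ := (h.wo4 x e he).2 hcoE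
    have hDf : P.D (P.cor x e) f := hDmono _ e f he hf hle hDe
    have hmax := ((h.wo4 x f hf).2 hcoEf).2.2
    exact ⟨hcoEf, hmax _ hlex hDf⟩
  refine ⟨?_, partb, ?_⟩
  · -- part (a)
    intro x y
    constructor
    · intro hxy
      have hxp : P.D x (P.plus y) := (hDplus x y).mp hxy
      have hcoE : P.coE x (P.plus y) :=
        ((h.wo4 x (P.plus y) ⟨y, rfl⟩).1).mpr ⟨x, h.le_refl x, hxp⟩
      obtain ⟨hle1, _, hmax⟩ := (h.wo4 x (P.plus y) ⟨y, rfl⟩).2 hcoE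
      exact ⟨hcoE, h.le_antisymm _ _ hle1 (hmax x (h.le_refl x) hxp)⟩
    · rintro ⟨hcoE, hcor⟩
      have hD := ((h.wo4 x (P.plus y) ⟨y, rfl⟩).2 hcoE).2.1
      rw [hcor] at hD
      exact (hDplus x y).mpr hD
  · -- part (c)
    intro x e f he hf hle hcoEf
    have hcoEe : P.coE x e := (h.wo6 x f e hf he hle).mp hcoEf
    obtain ⟨hax, hDae, hmaxe⟩ := (h.wo4 x e he).2 hcoEe
    obtain ⟨hbx, _, hmaxf⟩ := (h.wo4 x f hf).2 hcoEf
    have hDaf : P.D (P.cor x e) f := hDmono _ e f he hf hle hDae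
    have hab : P.le (P.cor x e) (P.cor x f) := hmaxf _ hax hDaf
    have hcoEbe : P.coE (P.cor x f) e :=
      ((h.wo4 (P.cor x f) e he).1).mpr ⟨P.cor x e, hab, hDae⟩
    obtain ⟨hcb, hDce, hmaxbe⟩ := (h.wo4 (P.cor x f) e he).2 hcoEbe
    refine ⟨hcoEbe, h.le_antisymm _ _ ?_ ?_⟩
    · exact hmaxe _ (h.le_trans _ _ _ hcb hbx) hDce
    · exact hmaxbe _ hab hDae
end

section
/- In an li-constellation T, if the corestriction x|e exists, then x|e = (x|e)⁺x. Moreover, if xy is defined and (xy)|e exists, then (xy)|e = (x|(y|e)⁺)(y|e). -/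
section Aux
variable {T : Type*} {P : PreConst T} (h : IsLiC P)
include h

lemma aux_plus_mul (x : T) : P.D (P.plus x) x ∧ P.mul (P.plus x) x = x :=
  (h.c3 (P.plus x) x ⟨x, rfl⟩).2 rfl

lemma aux_plus_idem {e : T} (he : P.isPlus e) : P.plus e = e := by
  obtain ⟨x, rfl⟩ := he
  have h1 := aux_plus_mul h x
  have hDee : P.D (P.plus x) (P.plus x) :=
    ((h.c1 (P.plus x) (P.plus x) x).mpr ⟨h1.1, by rw [h1.2]; exact h1.1⟩).1
  have hmul : P.mul (P.plus x) (P.plus x) = P.plus x := h.c4 _ _ ⟨x, rfl⟩ hDee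
  exact ((h.c3 (P.plus x) (P.plus x) ⟨x, rfl⟩).1 ⟨hDee, hmul⟩).symm

lemma aux_plus_of_mul {x y : T} (hxy : P.D x y) :
    P.D (P.plus x) (P.mul x y) ∧ P.plus (P.mul x y) = P.plus x := by
  have h1 := aux_plus_mul h x
  have hD : P.D (P.plus x) (P.mul x y) := ((h.c1 (P.plus x) x y).mp ⟨h1.1, hxy⟩).2
  have h2 := h.c2 (P.plus x) x y h1.1 hxy
  have : P.mul (P.plus x) (P.mul x y) = P.mul x y := by rw [h2.2, h1.2]
  exact ⟨hD, ((h.c3 (P.plus x) (P.mul x y) ⟨x, rfl⟩).1 ⟨hD, this⟩).symm⟩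

lemma aux_D_plus {x y : T} (hxy : P.D x y) : P.D x (P.plus y) := by
  have h1 := aux_plus_mul h y
  exact ((h.c1 x (P.plus y) y).mpr ⟨h1.1, by rw [h1.2]; exact hxy⟩).1

/-- Key step: if `c ≤ x` then `c⁺` is defined with `x` and `c = c⁺ x`. -/
lemma aux_le_mul {c x : T} (hle : P.le c x) :
    P.D (P.plus c) x ∧ c = P.mul (P.plus c) x := by
  have hpc : P.isPlus (P.plus c) := ⟨c, rfl⟩
  have hpx : P.isPlus (P.plus x) := ⟨x, rfl⟩
  have hle2 : P.le (P.plus c) (P.plus x) := h.wo2 c x hle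
  -- D (plus c) (plus x)
  have h8 := h.wo8 (P.plus c) (P.plus x) hpc hpx hle2
  have hle3 : P.le (P.plus c) (P.plus (P.plus x)) := by
    rw [aux_plus_idem h hpx]; exact hle2
  have h3 := h.wo3 (P.plus c) (P.plus x) hpc hle3
  have hres : P.plus c = P.res (P.plus c) (P.plus x) :=
    h3.2.2 (P.plus c) hle2 (aux_plus_idem h hpc)
  have hDpp : P.D (P.plus c) (P.plus x) := by
    have := ((h.wo4 (P.plus c) (P.plus x) hpx).2 h8.1).2.1
    rwa [h8.2, ← hres] at this
  have h1 := aux_plus_mul h x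
  have hDcx : P.D (P.plus c) x := by
    have := ((h.c1 (P.plus c) (P.plus x) x).mp ⟨hDpp, h1.1⟩).2
    rwa [h1.2] at this
  refine ⟨hDcx, ?_⟩
  -- both c and (plus c) x equal res (plus c) x
  have h3' := h.wo3 (P.plus c) x hpc hle2
  have hc : c = P.res (P.plus c) x := h3'.2.2 c hle rfl
  have hlem : P.le (P.mul (P.plus c) x) x := by
    have := h.wo1 (P.plus c) (P.plus x) x x hle2 (h.le_refl x) hDcx h1.1
    rwa [h1.2] at this
  have hplem : P.plus (P.mul (P.plus c) x) = P.plus c := by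
    rw [(aux_plus_of_mul h hDcx).2, aux_plus_idem h hpc]
  have := h3'.2.2 (P.mul (P.plus c) x) hlem hplem
  exact hc.trans this.symm

end Aux

/-- In an li-constellation, if the corestriction `x|e` exists then
`x|e = (x|e)⁺x`; moreover, if `xy` is defined and `(xy)|e` exists then
`(xy)|e = (x|(y|e)⁺)(y|e)`. -/
theorem stmt10 {T : Type*} (P : PreConst T) (h : IsLiC P) :
    (∀ x e, P.isPlus e → P.coE x e →
      P.D (P.plus (P.cor x e)) x ∧ P.cor x e = P.mul (P.plus (P.cor x e)) x) ∧
    (∀ x y e, P.isPlus e → P.D x y → P.coE (P.mul x y) e →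
      P.D (P.cor x (P.plus (P.cor y e))) (P.cor y e) ∧
      P.cor (P.mul x y) e = P.mul (P.cor x (P.plus (P.cor y e))) (P.cor y e)) := by
  have part1 : ∀ x e, P.isPlus e → P.coE x e →
      P.D (P.plus (P.cor x e)) x ∧ P.cor x e = P.mul (P.plus (P.cor x e)) x := by
    intro x e he hco
    have h4 := (h.wo4 x e he).2 hco
    exact aux_le_mul h h4.1
  refine ⟨part1, ?_⟩
  intro x y e he hxy hco
  set d := P.cor y e with hd
  set c := P.cor x (P.plus d) with hc
  have hpd : P.isPlus (P.plus d) := ⟨d, rfl⟩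
  have hpy : P.isPlus (P.plus y) := ⟨y, rfl⟩
  have hcoy : P.coE y e := (h.wo5 x y e he hxy).mp hco
  have h4y := (h.wo4 y e he).2 hcoy
  have hdy : P.le d y := h4y.1
  -- coE x (plus d)
  have hcoxy' : P.coE x (P.plus y) :=
    (h.wo4 x (P.plus y) hpy).1.mpr ⟨x, h.le_refl x, aux_D_plus h hxy⟩
  have hcoc : P.coE x (P.plus d) :=
    (h.wo6 x (P.plus y) (P.plus d) hpy hpd (h.wo2 d y hdy)).mp hcoxy'
  have h4c := (h.wo4 x (P.plus d) hpd).2 hcoc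
  have hcx : P.le c x := h4c.1
  have hDcpd : P.D c (P.plus d) := h4c.2.1
  have hpdd := aux_plus_mul h d
  have hDcd : P.D c d := by
    have := ((h.c1 c (P.plus d) d).mp ⟨hDcpd, hpdd.1⟩).2
    rwa [hpdd.2] at this
  refine ⟨hDcd, ?_⟩
  -- both sides equal res (plus k) (xy)
  have hk4 := (h.wo4 (P.mul x y) e he).2 hco
  have hk7 := h.wo7 x y e he hxy hco
  have hlecd : P.le (P.mul c d) (P.mul x y) := h.wo1 c x d y hcx hdy hDcd hxy
  have hpcd : P.plus (P.mul c d) = P.plus (P.cor (P.mul x y) e) := by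
    rw [(aux_plus_of_mul h hDcd).2, hk7]
  have hle3 : P.le (P.plus (P.cor (P.mul x y) e)) (P.plus (P.mul x y)) :=
    h.wo2 _ _ hk4.1
  have h3 := h.wo3 (P.plus (P.cor (P.mul x y) e)) (P.mul x y)
    ⟨_, rfl⟩ hle3
  have e1 := h3.2.2 (P.cor (P.mul x y) e) hk4.1 rfl
  have e2 := h3.2.2 (P.mul c d) hlecd hpcd
  rw [e1, e2]
end

section
/- Given a left restriction semigroupoid (S,+), define C(S) with the same underlying set, composable pairs C(S)⁽²⁾ = {(s,t) : st⁺ is defined and st⁺ = s}, operation s•t = st, the same unary operation +, and order s ≤ t iff s⁺t is defined and s = s⁺t. Then C(S) is an li-constellation; moreover, for e ∈ S⁺ and s ∈ S, the restriction e|s equals es whenever e ≤ s⁺, and the corestriction s|e exists iff se is defined, in which case s|e = se. -/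
/-- A "pre-semigroupoid": a carrier with a definedness predicate `D`,
a (total, but only meaningful on `D`) multiplication, and a unary operation `plus`. -/
structure PreSgpd (S : Type*) where
  D : S → S → Prop
  mul : S → S → S
  plus : S → S

/-- `e` lies in `S⁺`, the image of the unary operation. -/
def PreSgpd.isPlus {S : Type*} (A : PreSgpd S) (e : S) : Prop := ∃ s, e = A.plus s

/-- The natural partial order of a left restriction semigroupoid:
`s ≤ t` iff `s⁺t` is defined and `s⁺t = s`. -/
def PreSgpd.le {S : Type*} (A : PreSgpd S) (s t : S) : Prop :=
  A.D (A.plus s) t ∧ A.mul (A.plus s) t = s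

/-- `A` is a left restriction semigroupoid: the associativity axioms of a
semigroupoid together with (lr1)-(lr4). -/
structure IsLRS {S : Type*} (A : PreSgpd S) : Prop where
  assoc1 : ∀ s t r, A.D s t → A.D t r →
    A.D (A.mul s t) r ∧ A.D s (A.mul t r) ∧ A.mul (A.mul s t) r = A.mul s (A.mul t r)
  assoc2 : ∀ s t r, A.D s t → A.D (A.mul s t) r →
    A.D t r ∧ A.D s (A.mul t r) ∧ A.mul (A.mul s t) r = A.mul s (A.mul t r)
  assoc3 : ∀ s t r, A.D t r → A.D s (A.mul t r) →
    A.D s t ∧ A.D (A.mul s t) r ∧ A.mul (A.mul s t) r = A.mul s (A.mul t r)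
  lr1 : ∀ s, A.D (A.plus s) s ∧ A.mul (A.plus s) s = s
  lr2 : ∀ s t, (A.D (A.plus s) (A.plus t) ↔ A.D (A.plus t) (A.plus s)) ∧
    (A.D (A.plus s) (A.plus t) → A.mul (A.plus s) (A.plus t) = A.mul (A.plus t) (A.plus s))
  lr3 : ∀ s t, A.D (A.plus s) t →
    A.D (A.plus s) (A.plus t) ∧ A.plus (A.mul (A.plus s) t) = A.mul (A.plus s) (A.plus t)
  lr4 : ∀ s t, A.D s t →
    A.D s (A.plus t) ∧ A.D (A.plus (A.mul s t)) s ∧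
      A.mul s (A.plus t) = A.mul (A.plus (A.mul s t)) s

/-- The li-constellation `C(S)` associated to a left restriction semigroupoid:
same carrier and `+`; `s • t` is defined iff `st⁺` is defined and `st⁺ = s`;
the order is the natural partial order; restriction `e|s = es`;
corestriction `s|e` exists iff `se` is defined, and then equals `se`. -/
def CofS {S : Type*} (A : PreSgpd S) : PreConst S where
  D s t := A.D s (A.plus t) ∧ A.mul s (A.plus t) = s
  mul := A.mul
  plus := A.plus
  le s t := A.D (A.plus s) t ∧ A.mul (A.plus s) t = s
  res e s := A.mul e s
  coE s e := A.D s e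
  cor s e := A.mul s e

/-- The left restriction semigroupoid `G(T)` associated to an li-constellation:
same carrier and `+`; `x ⊗ y` is defined iff the corestriction `x|y⁺` exists,
and then `x ⊗ y = (x|y⁺)y`. -/
def GofT {T : Type*} (P : PreConst T) : PreSgpd T where
  D x y := P.coE x (P.plus y)
  mul x y := P.mul (P.cor x (P.plus y)) y
  plus := P.plus

section Aux

variable {S : Type*} {A : PreSgpd S}

private lemma mul_pp (h : IsLRS A) (s : S) :
    A.D (A.plus s) (A.plus s) ∧ A.mul (A.plus s) (A.plus s) = A.plus s := by
  obtain ⟨d1, e1⟩ := h.lr1 s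
  obtain ⟨d2, e2⟩ := h.lr3 s s d1
  rw [e1] at e2
  exact ⟨d2, e2.symm⟩

private lemma pp (h : IsLRS A) (s : S) : A.plus (A.plus s) = A.plus s := by
  obtain ⟨dee, eee⟩ := mul_pp h s
  obtain ⟨def1, hef⟩ := h.lr3 s (A.plus s) dee
  rw [eee] at hef
  have hfe := (h.lr2 s (A.plus s)).2 def1
  obtain ⟨d3, e3⟩ := h.lr1 (A.plus s)
  rw [hef, hfe, e3]

private lemma pe (h : IsLRS A) {e : S} (he : A.isPlus e) : A.plus e = e := by
  obtain ⟨s, rfl⟩ := he; exact pp h s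

private lemma idem (h : IsLRS A) {e : S} (he : A.isPlus e) :
    A.D e e ∧ A.mul e e = e := by
  obtain ⟨s, rfl⟩ := he; exact mul_pp h s

private lemma D_unplus (h : IsLRS A) {s t : S} (d : A.D s (A.plus t)) : A.D s t := by
  obtain ⟨d1, e1⟩ := h.lr1 t
  obtain ⟨_, d2, _⟩ := h.assoc1 s (A.plus t) t d d1
  rwa [e1] at d2

private lemma plus_absorb (h : IsLRS A) {s t : S} (d : A.D s t) :
    A.D (A.plus s) (A.mul s t) ∧ A.mul (A.plus s) (A.mul s t) = A.mul s t := by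
  obtain ⟨d1, e1⟩ := h.lr1 s
  obtain ⟨da, db, e2⟩ := h.assoc1 (A.plus s) s t d1 d
  rw [e1] at e2
  exact ⟨db, e2.symm⟩

private lemma plus_mul_ps (h : IsLRS A) {s t : S} (d : A.D s t) :
    A.D (A.plus (A.mul s t)) (A.plus s) ∧
      A.mul (A.plus (A.mul s t)) (A.plus s) = A.plus (A.mul s t) := by
  obtain ⟨db, e2⟩ := plus_absorb h d
  obtain ⟨d3, e3⟩ := h.lr3 s (A.mul s t) db
  rw [e2] at e3
  have hcomm := (h.lr2 s (A.mul s t)).2 d3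
  have d4 := (h.lr2 s (A.mul s t)).1.mp d3
  rw [hcomm] at e3
  exact ⟨d4, e3.symm⟩

private lemma plus_spt (h : IsLRS A) {s t : S} (d : A.D s t) :
    A.plus (A.mul s (A.plus t)) = A.plus (A.mul s t) := by
  obtain ⟨_, d2, e2⟩ := h.lr4 s t d
  obtain ⟨_, e3⟩ := h.lr3 (A.mul s t) s d2
  rw [e2, e3, (plus_mul_ps h d).2]

private lemma DC_plus (h : IsLRS A) {s t : S} (d : A.D s (A.plus t))
    (e : A.mul s (A.plus t) = s) : A.plus (A.mul s t) = A.plus s := by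
  have h5 := plus_spt h (D_unplus h d)
  rw [e] at h5
  exact h5.symm

private lemma le_of_plus (h : IsLRS A) {e f : S} (he : A.isPlus e) (hf : A.isPlus f)
    (hle : A.le f e) :
    A.D f e ∧ A.mul f e = f ∧ A.D e f ∧ A.mul e f = f := by
  obtain ⟨sf, rfl⟩ := hf
  obtain ⟨se, rfl⟩ := he
  obtain ⟨d1, e1⟩ := hle
  rw [pp h sf] at d1 e1
  have hc := (h.lr2 sf se).2 d1
  have d2 := (h.lr2 sf se).1.mp d1
  refine ⟨d1, e1, d2, ?_⟩
  rw [← hc, e1]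

private lemma D_down (h : IsLRS A) {x e f : S} (he : A.isPlus e) (hf : A.isPlus f)
    (hle : A.le f e) (dx : A.D x e) : A.D x f := by
  obtain ⟨_, _, d2, e2⟩ := le_of_plus h he hf hle
  obtain ⟨_, d3, _⟩ := h.assoc1 x e f dx d2
  rwa [e2] at d3

private lemma D_up (h : IsLRS A) {x e f : S} (he : A.isPlus e) (hf : A.isPlus f)
    (hle : A.le f e) (dx : A.D x f) : A.D x e := by
  obtain ⟨d1, e1, _, _⟩ := le_of_plus h he hf hle
  obtain ⟨dxf_e, _, _⟩ := h.assoc1 x f e dx d1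
  obtain ⟨_, dpx, e4⟩ := h.lr4 x f dx
  rw [pe h hf] at e4
  rw [e4] at dxf_e
  exact (h.assoc2 (A.plus (A.mul x f)) x e dpx dxf_e).1

private lemma ps_le (h : IsLRS A) {s t : S} (hle : A.le s t) :
    A.D (A.plus s) (A.plus t) ∧ A.mul (A.plus s) (A.plus t) = A.plus s := by
  obtain ⟨d1, e1⟩ := hle
  obtain ⟨d2, e2⟩ := h.lr3 s t d1
  rw [e1] at e2
  exact ⟨d2, e2.symm⟩

end Aux

/-- `C(S)` is an li-constellation; moreover restrictions in `C(S)` are given by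
`e|s = es` (for `e ≤ s⁺`), and the corestriction `s|e` exists iff `se` is
defined, in which case `s|e = se`. -/
theorem stmt12 {S : Type*} (A : PreSgpd S) (h : IsLRS A) :
    IsLiC (CofS A) ∧
    (∀ e s, A.isPlus e → A.le e (A.plus s) →
      A.D e s ∧ (CofS A).res e s = A.mul e s) ∧
    (∀ s e, A.isPlus e →
      ((CofS A).coE s e ↔ A.D s e) ∧
      ((CofS A).coE s e → (CofS A).cor s e = A.mul s e)) := by
  refine ⟨⟨⟨?c1, ?c2, ?c3, ?c4⟩, ?lerefl, ?letrans, ?leanti, ?wo1, ?wo2, ?wo3,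
    ?wo4, ?wo5, ?wo6, ?wo7, ?wo8, ?wo9a, ?wo9b⟩, ?part2, ?part3⟩
  case c1 =>
    intro x y z
    dsimp only [CofS]
    constructor
    · rintro ⟨⟨dxy, exy⟩, ⟨dyz, eyz⟩⟩
      have hp : A.plus (A.mul y z) = A.plus y := DC_plus h dyz eyz
      rw [hp]
      exact ⟨⟨dyz, eyz⟩, dxy, exy⟩
    · rintro ⟨⟨dyz, eyz⟩, dxyz, exyz⟩
      have hp : A.plus (A.mul y z) = A.plus y := DC_plus h dyz eyz
      rw [hp] at dxyz exyz
      exact ⟨⟨dxyz, exyz⟩, dyz, eyz⟩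
  case c2 =>
    intro x y z hxy hyz
    dsimp only [CofS] at *
    obtain ⟨dxy, exy⟩ := hxy
    obtain ⟨dyz, eyz⟩ := hyz
    have dxy' := D_unplus h dxy
    have dyz' := D_unplus h dyz
    obtain ⟨d1, d2, e1⟩ := h.assoc1 x y (A.plus z) dxy' dyz
    rw [eyz] at e1
    obtain ⟨_, _, e2⟩ := h.assoc1 x y z dxy' dyz'
    exact ⟨⟨d1, e1⟩, e2.symm⟩
  case c3 =>
    intro e x he
    dsimp only [CofS, PreConst.isPlus] at *
    constructor
    · rintro ⟨⟨dex, eex⟩, hex⟩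
      have h5 := plus_spt h (D_unplus h dex)
      rw [eex, hex] at h5
      rw [← h5, pe h he]
    · rintro rfl
      exact ⟨mul_pp h x, (h.lr1 x).2⟩
  case c4 =>
    intro e x he hxe
    dsimp only [CofS, PreConst.isPlus] at *
    obtain ⟨dxe, exe⟩ := hxe
    rwa [pe h he] at exe
  case lerefl =>
    intro x
    exact h.lr1 x
  case letrans =>
    intro x y z hxy hyz
    dsimp only [CofS] at *
    have hp := ps_le h hxy
    obtain ⟨d1, e1⟩ := hxy
    obtain ⟨d2, e2⟩ := hyz
    have dxpyz : A.D (A.plus x) (A.mul (A.plus y) z) := by rw [e2]; exact d1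
    obtain ⟨_, d3, e3⟩ := h.assoc3 (A.plus x) (A.plus y) z d2 dxpyz
    rw [hp.2] at d3 e3
    refine ⟨d3, ?_⟩
    rw [e3, e2]; exact e1
  case leanti =>
    intro x y hxy hyx
    dsimp only [CofS] at *
    have h1 := ps_le h hxy
    have h2 := ps_le h hyx
    have hc := (h.lr2 x y).2 h1.1
    have hpe : A.plus x = A.plus y := by rw [← h1.2, hc, h2.2]
    obtain ⟨d1, e1⟩ := hxy
    rw [hpe] at e1
    rw [← e1]; exact (h.lr1 y).2
  case wo1 =>
    intro x y x' y' hxy hx'y' hxx' hyy'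
    dsimp only [CofS] at *
    obtain ⟨dxx', exx'⟩ := hxx'
    obtain ⟨dyy', eyy'⟩ := hyy'
    have hpx : A.plus (A.mul x x') = A.plus x := DC_plus h dxx' exx'
    have dyy'' := D_unplus h dyy'
    obtain ⟨d1, e1⟩ := hxy
    obtain ⟨d1', e1'⟩ := hx'y'
    obtain ⟨da, db, ea⟩ := h.assoc1 (A.plus x) y y' d1 dyy''
    rw [e1] at da ea
    have dxpy' : A.D x (A.mul (A.plus x') y') := by rw [e1']; exact D_unplus h dxx'
    obtain ⟨dxpx', dc, ec⟩ := h.assoc3 x (A.plus x') y' d1' dxpy'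
    rw [exx', e1'] at ec
    refine ⟨?_, ?_⟩
    · rw [hpx]; exact db
    · rw [hpx, ← ea]; exact ec
  case wo2 =>
    intro x y hxy
    dsimp only [CofS] at *
    have h1 := ps_le h hxy
    rw [pp h x]
    exact h1
  case wo3 =>
    intro e x he hle
    dsimp only [CofS, PreConst.isPlus] at *
    obtain ⟨d1, e1⟩ := hle
    rw [pe h he] at d1 e1
    have dex : A.D e x := D_unplus h d1
    have hpex : A.plus (A.mul e x) = e := by
      have h5 := plus_spt h dex; rw [e1, pe h he] at h5; exact h5.symm
    refine ⟨⟨?_, ?_⟩, hpex, ?_⟩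
    · rw [hpex]; exact dex
    · rw [hpex]
    · rintro r ⟨dr, er⟩ hpr
      rw [← hpr]; exact er.symm
  case wo4 =>
    intro x e he
    dsimp only [CofS, PreConst.isPlus] at *
    have hpe := pe h he
    constructor
    · constructor
      · intro dxe
        obtain ⟨dpe2, dpxe, e4⟩ := h.lr4 x e dxe
        rw [hpe] at e4
        obtain ⟨d5, _, e5⟩ := h.assoc1 x e e dxe (idem h he).1
        rw [(idem h he).2] at e5
        refine ⟨A.mul x e, ⟨dpxe, e4.symm⟩, ?_, ?_⟩
        · rw [hpe]; exact d5
        · rw [hpe]; exact e5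
      · rintro ⟨y, ⟨dy, ey⟩, dye, eye⟩
        rw [hpe] at dye
        rw [← ey] at dye
        exact (h.assoc2 (A.plus y) x e dy dye).1
    · intro dxe
      obtain ⟨dpe2, dpxe, e4⟩ := h.lr4 x e dxe
      rw [hpe] at e4
      obtain ⟨d5, _, e5⟩ := h.assoc1 x e e dxe (idem h he).1
      rw [(idem h he).2] at e5
      refine ⟨⟨dpxe, e4.symm⟩, ⟨?_, ?_⟩, ?_⟩
      · rw [hpe]; exact d5
      · rw [hpe]; exact e5
      · rintro y ⟨dy, ey⟩ ⟨dye, eye⟩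
        rw [hpe] at dye eye
        obtain ⟨dA, dB, eA⟩ := h.assoc1 (A.plus y) x e dy dxe
        rw [ey] at eA
        refine ⟨dB, ?_⟩
        rw [← eA]; exact eye
  case wo5 =>
    intro x y e he hxy
    dsimp only [CofS, PreConst.isPlus] at *
    obtain ⟨dxy, exy⟩ := hxy
    have dxy' := D_unplus h dxy
    exact ⟨fun d => (h.assoc2 x y e dxy' d).1, fun d => (h.assoc1 x y e dxy' d).1⟩
  case wo6 =>
    intro x e f he hf hlef
    dsimp only [CofS, PreConst.isPlus] at *
    exact ⟨fun d => D_down h he hf hlef d, fun d => D_up h he hf hlef d⟩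
  case wo7 =>
    intro x y e he hxy dxye
    dsimp only [CofS, PreConst.isPlus] at *
    obtain ⟨dxy, exy⟩ := hxy
    have dxy' := D_unplus h dxy
    obtain ⟨dye, dxye2, eA⟩ := h.assoc2 x y e dxy' dxye
    have h5 := plus_spt h dxye2
    rw [eA, ← h5]
  case wo8 =>
    intro e f he hf hle
    dsimp only [CofS, PreConst.isPlus] at *
    obtain ⟨d1, e1⟩ := hle
    rw [pe h he] at d1
    exact ⟨d1, rfl⟩
  case wo9a =>
    intro e f he hf hconn
    dsimp only [CofS, PreConst.isPlus, PreConst.connected] at *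
    clear hf
    induction hconn with
    | refl => exact (idem h he).1
    | tail hab hbf ih =>
        obtain ⟨hb, hc, hor⟩ := hbf
        rcases hor with hle | hle
        · exact D_up h hc hb hle ih
        · exact D_down h hb hc hle ih
  case wo9b =>
    intro e f he hf def_
    dsimp only [CofS, PreConst.isPlus] at *
    have hpf := pe h hf
    have hplus : A.plus (A.mul e f) = A.mul e f := by
      obtain ⟨se, rfl⟩ := he
      obtain ⟨_, e3⟩ := h.lr3 se f def_
      rw [e3, hpf]
    have hcomm : A.mul e f = A.mul f e := by
      obtain ⟨se, rfl⟩ := he; obtain ⟨sf, rfl⟩ := hf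
      exact (h.lr2 se sf).2 def_
    have dfe : A.D f e := by
      obtain ⟨se, rfl⟩ := he; obtain ⟨sf, rfl⟩ := hf
      exact (h.lr2 se sf).1.mp def_
    obtain ⟨dA, _, eA⟩ := h.assoc1 f e e dfe (idem h he).1
    rw [(idem h he).2] at eA
    obtain ⟨dB, _, eB⟩ := h.assoc1 e f f def_ (idem h hf).1
    rw [(idem h hf).2] at eB
    refine ⟨⟨A.mul e f, hplus.symm⟩, ⟨?_, ?_⟩, ⟨?_, ?_⟩, ?_⟩
    · rw [hplus, hcomm]; exact dA
    · rw [hplus, hcomm]; exact eA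
    · rw [hplus]; exact dB
    · rw [hplus]; exact eB
    · rintro g hg ⟨dg1, eg1⟩ ⟨dg2, eg2⟩
      have hpg := pe h hg
      rw [hpg] at dg1 eg1 dg2 eg2
      obtain ⟨_, dC, eC⟩ := h.assoc1 g e f dg1 def_
      rw [eg1] at eC
      refine ⟨?_, ?_⟩
      · rw [hpg]; exact dC
      · rw [hpg, ← eC]; exact eg2
  case part2 =>
    intro e s he hle
    obtain ⟨d1, e1⟩ := hle
    rw [pe h he] at d1
    exact ⟨D_unplus h d1, rfl⟩
  case part3 =>
    intro s e he
    exact ⟨Iff.rfl, fun _ => rfl⟩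
end

section
/- Given an li-constellation T, define G(T) with the same underlying set, composable pairs G(T)⁽²⁾ = {(x,y) : the corestriction x|y⁺ exists}, pseudo-product x ⊗ y = (x|y⁺)y, and the same unary operation +. Then (G(T), ⊗, +) is a left restriction semigroupoid. -/
namespace LiAux

variable {T : Type*} {P : PreConst T} (h : IsLiC P)
lemma isP (x : T) : P.isPlus (P.plus x) := ⟨x, rfl⟩

include h

lemma dplus (x : T) : P.D (P.plus x) x ∧ P.mul (P.plus x) x = x :=
  (h.c3 _ x (isP x)).mpr rfl

lemma plus_plus (x : T) : P.plus (P.plus x) = P.plus x := by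
  have h1 := (h.c3 (P.plus (P.plus x)) (P.plus x) (isP _)).mpr rfl
  have h2 := h.c4 _ _ (isP x) h1.1
  rw [h2] at h1
  exact h1.2

lemma plus_of_isPlus {e : T} (he : P.isPlus e) : P.plus e = e := by
  obtain ⟨x, rfl⟩ := he; exact plus_plus h x

lemma D_iff (x y : T) : P.D x y ↔ P.D x (P.plus y) := by
  have c := h.c1 x (P.plus y) y
  have d := dplus h y
  constructor
  · intro hd
    exact (c.mpr ⟨d.1, by rw [d.2]; exact hd⟩).1
  · intro hd
    have h2 := (c.mp ⟨hd, d.1⟩).2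
    rwa [d.2] at h2

lemma plus_mul {x y : T} (hxy : P.D x y) : P.plus (P.mul x y) = P.plus x := by
  have d := dplus h x
  have c1 := (h.c1 (P.plus x) x y).mp ⟨d.1, hxy⟩
  have c2 := h.c2 _ _ _ d.1 hxy
  have hm : P.mul (P.plus x) (P.mul x y) = P.mul x y := by rw [c2.2, d.2]
  exact ((h.c3 _ _ (isP x)).mp ⟨c1.2, hm⟩).symm

lemma coE_iff {e : T} (he : P.isPlus e) (x : T) :
    P.coE x e ↔ ∃ y, P.le y x ∧ P.D y e := (h.wo4 x e he).1

lemma cor_le {x e : T} (he : P.isPlus e) (hc : P.coE x e) : P.le (P.cor x e) x :=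
  ((h.wo4 x e he).2 hc).1

lemma cor_D {x e : T} (he : P.isPlus e) (hc : P.coE x e) : P.D (P.cor x e) e :=
  ((h.wo4 x e he).2 hc).2.1

lemma cor_max {x e : T} (he : P.isPlus e) (hc : P.coE x e) :
    ∀ y, P.le y x → P.D y e → P.le y (P.cor x e) := ((h.wo4 x e he).2 hc).2.2

lemma cor_of_D {x e : T} (he : P.isPlus e) (hd : P.D x e) :
    P.coE x e ∧ P.cor x e = x := by
  have hc : P.coE x e := (coE_iff h he x).mpr ⟨x, h.le_refl x, hd⟩
  exact ⟨hc, h.le_antisymm _ _ (cor_le h he hc) (cor_max h he hc x (h.le_refl x) hd)⟩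

/-- For projections `e ≤ f`, the corestriction `e|f` exists and equals `e`,
and `ef` is defined. -/
lemma cor_proj {e f : T} (he : P.isPlus e) (hf : P.isPlus f) (hef : P.le e f) :
    P.coE e f ∧ P.cor e f = e ∧ P.D e f := by
  have w8 := h.wo8 e f he hf hef
  have hlef : P.le e (P.plus f) := by rw [plus_of_isPlus h hf]; exact hef
  have w3 := h.wo3 e f he hlef
  have hre : e = P.res e f := w3.2.2 e hef (plus_of_isPlus h he)
  have hc : P.cor e f = e := by rw [w8.2, ← hre]
  have hd : P.D e f := by have hh := cor_D h hf w8.1; rwa [hc] at hh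
  exact ⟨w8.1, hc, hd⟩

lemma D_le_trans {y e f : T} (hd : P.D y e) (he : P.isPlus e) (hf : P.isPlus f)
    (hef : P.le e f) : P.D y f := by
  have hye : P.mul y e = y := h.c4 e y he hd
  have c2 := (h.c2 y e f hd (cor_proj h he hf hef).2.2).1
  rwa [hye] at c2

/-- For a projection `e ≤ x⁺`, `ex` is defined and equals the restriction `e|x`. -/
lemma mul_proj {e x : T} (he : P.isPlus e) (hle : P.le e (P.plus x)) :
    P.D e x ∧ P.mul e x = P.res e x := by
  have hdx : P.D e x := (D_iff h e x).mpr (cor_proj h he (isP x) hle).2.2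
  have w1 := h.wo1 e (P.plus x) x x hle (h.le_refl x) hdx (dplus h x).1
  rw [(dplus h x).2] at w1
  have w3 := h.wo3 e x he hle
  exact ⟨hdx, w3.2.2 _ w1 (by rw [plus_mul h hdx, plus_of_isPlus h he])⟩

/-- `x|e = ((x|e)⁺)|x` as a restriction. -/
lemma cor_eq_res {x e : T} (he : P.isPlus e) (hc : P.coE x e) :
    P.le (P.plus (P.cor x e)) (P.plus x) ∧
      P.cor x e = P.res (P.plus (P.cor x e)) x := by
  have h1 := cor_le h he hc
  have h2 := h.wo2 _ _ h1
  exact ⟨h2, (h.wo3 (P.plus (P.cor x e)) x (isP _) h2).2.2 _ h1 rfl⟩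

/-- `(xy)|e = (x|(y|e)⁺)(y|e)`. -/
lemma cor_mul {x y e : T} (hd : P.D x y) (he : P.isPlus e)
    (hc : P.coE (P.mul x y) e) :
    P.coE y e ∧ P.coE x (P.plus (P.cor y e)) ∧
      P.cor (P.mul x y) e
        = P.mul (P.cor x (P.plus (P.cor y e))) (P.cor y e) := by
  have hcy : P.coE y e := (h.wo5 x y e he hd).mp hc
  have hCle : P.le (P.cor y e) y := cor_le h he hcy
  have hg : P.le (P.plus (P.cor y e)) (P.plus y) := h.wo2 _ _ hCle
  have hxpy : P.coE x (P.plus y) :=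
    (coE_iff h (isP y) x).mpr ⟨x, h.le_refl x, (D_iff h x y).mp hd⟩
  have hxg : P.coE x (P.plus (P.cor y e)) :=
    (h.wo6 x (P.plus y) (P.plus (P.cor y e)) (isP y) (isP _) hg).mp hxpy
  have hBle : P.le (P.cor x (P.plus (P.cor y e))) x := cor_le h (isP _) hxg
  have hBC : P.D (P.cor x (P.plus (P.cor y e))) (P.cor y e) :=
    (D_iff h _ _).mpr (cor_D h (isP _) hxg)
  have hBCle := h.wo1 _ x _ y hBle hCle hBC hd
  have hpBC := plus_mul h hBC
  have w7 := h.wo7 x y e he hd hc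
  have hAle := cor_le h he hc
  have hpAle := h.wo2 _ _ hAle
  have w3 := h.wo3 (P.plus (P.cor (P.mul x y) e)) (P.mul x y) (isP _) hpAle
  have e1 := w3.2.2 _ hAle rfl
  have e2 := w3.2.2 _ hBCle (by rw [hpBC, ← w7])
  exact ⟨hcy, hxg, e1.trans e2.symm⟩

/-- `(x|f)|e = x|e` when `e ≤ f`. -/
lemma cor_cor {x e f : T} (he : P.isPlus e) (hf : P.isPlus f) (hef : P.le e f)
    (hcf : P.coE x f) :
    P.coE x e ∧ P.coE (P.cor x f) e ∧ P.cor (P.cor x f) e = P.cor x e := by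
  have hce : P.coE x e := (h.wo6 x f e hf he hef).mp hcf
  have h1 : P.D (P.cor x e) f := D_le_trans h (cor_D h he hce) he hf hef
  have h2 : P.le (P.cor x e) (P.cor x f) :=
    cor_max h hf hcf _ (cor_le h he hce) h1
  have hcfe : P.coE (P.cor x f) e :=
    (coE_iff h he _).mpr ⟨P.cor x e, h2, cor_D h he hce⟩
  have h3 : P.le (P.cor (P.cor x f) e) (P.cor x e) :=
    cor_max h he hce _ (h.le_trans _ _ _ (cor_le h he hcfe) (cor_le h hf hcf))
      (cor_D h he hcfe)
  have h4 : P.le (P.cor x e) (P.cor (P.cor x f) e) :=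
    cor_max h he hcfe _ h2 (cor_D h he hce)
  exact ⟨hce, hcfe, h.le_antisymm _ _ h3 h4⟩

lemma coE_proj_symm {e f : T} (he : P.isPlus e) (hf : P.isPlus f)
    (hc : P.coE e f) : P.coE f e ∧ P.cor f e = P.cor e f := by
  have w := h.wo9b e f he hf hc
  have conn : P.connected f e :=
    Relation.ReflTransGen.head ⟨hf, w.1, Or.inr w.2.2.1⟩
      (Relation.ReflTransGen.single ⟨w.1, he, Or.inl w.2.1⟩)
  have hcfe : P.coE f e := h.wo9a f e hf he conn
  have w' := h.wo9b f e hf he hcfe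
  have a1 : P.le (P.cor f e) (P.cor e f) := w.2.2.2 _ w'.1 w'.2.2.1 w'.2.1
  have a2 : P.le (P.cor e f) (P.cor f e) := w'.2.2.2 _ w.1 w.2.2.1 w.2.1
  exact ⟨hcfe, h.le_antisymm _ _ a1 a2⟩

/-- `e ⊗ f = e|f` for the pseudoproduct, whenever `f` is a projection. -/
lemma gmul_proj {e f : T} (hf : P.isPlus f) (hc : P.coE e f) :
    P.mul (P.cor e (P.plus f)) f = P.cor e f := by
  rw [plus_of_isPlus h hf]
  exact h.c4 f _ hf (cor_D h hf hc)

/-- The core of associativity for the pseudoproduct. -/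
lemma gAssoc {s t r : T} (hst : P.coE s (P.plus t)) (htr : P.coE t (P.plus r)) :
    P.coE (P.mul (P.cor s (P.plus t)) t) (P.plus r) ∧
    P.coE s (P.plus (P.mul (P.cor t (P.plus r)) r)) ∧
    P.mul (P.cor (P.mul (P.cor s (P.plus t)) t) (P.plus r)) r
      = P.mul (P.cor s (P.plus (P.mul (P.cor t (P.plus r)) r)))
          (P.mul (P.cor t (P.plus r)) r) := by
  have hDst : P.D (P.cor s (P.plus t)) t := (D_iff h _ _).mpr (cor_D h (isP t) hst)
  have hDtr : P.D (P.cor t (P.plus r)) r := (D_iff h _ _).mpr (cor_D h (isP r) htr)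
  have g1 : P.coE (P.mul (P.cor s (P.plus t)) t) (P.plus r) :=
    (h.wo5 _ t (P.plus r) (isP r) hDst).mpr htr
  have hptr : P.plus (P.mul (P.cor t (P.plus r)) r) = P.plus (P.cor t (P.plus r)) :=
    plus_mul h hDtr
  have hgle : P.le (P.plus (P.cor t (P.plus r))) (P.plus t) :=
    h.wo2 _ _ (cor_le h (isP r) htr)
  have hsg : P.coE s (P.plus (P.cor t (P.plus r))) :=
    (h.wo6 s (P.plus t) _ (isP t) (isP _) hgle).mp hst
  have g2 : P.coE s (P.plus (P.mul (P.cor t (P.plus r)) r)) := by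
    rw [hptr]; exact hsg
  refine ⟨g1, g2, ?_⟩
  have hcm := cor_mul h hDst (isP r) g1
  have hcc := cor_cor h (isP (P.cor t (P.plus r))) (isP t) hgle hst
  have hcytr : P.cor (P.cor s (P.plus t)) (P.plus (P.cor t (P.plus r)))
      = P.cor s (P.plus (P.cor t (P.plus r))) := hcc.2.2
  have hDBC : P.D (P.cor s (P.plus (P.cor t (P.plus r)))) (P.cor t (P.plus r)) :=
    (D_iff h _ _).mpr (cor_D h (isP _) hsg)
  have hc2 := h.c2 _ _ _ hDBC hDtr
  calc P.mul (P.cor (P.mul (P.cor s (P.plus t)) t) (P.plus r)) r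
      = P.mul (P.mul (P.cor s (P.plus (P.cor t (P.plus r)))) (P.cor t (P.plus r))) r := by
        rw [hcm.2.2, hcytr]
    _ = P.mul (P.cor s (P.plus (P.cor t (P.plus r)))) (P.mul (P.cor t (P.plus r)) r) :=
        hc2.2.symm
    _ = P.mul (P.cor s (P.plus (P.mul (P.cor t (P.plus r)) r)))
          (P.mul (P.cor t (P.plus r)) r) := by rw [hptr]

end LiAux


/-- For an li-constellation `T`, the structure `G(T)` (same carrier and `+`,
with `x ⊗ y` defined iff the corestriction `x|y⁺` exists, in which case
`x ⊗ y = (x|y⁺)y`) is a left restriction semigroupoid. -/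
theorem stmt13 {T : Type*} (P : PreConst T) (h : IsLiC P) :
    IsLRS (GofT P) := by
  open LiAux in
  refine { assoc1 := ?_, assoc2 := ?_, assoc3 := ?_, lr1 := ?_, lr2 := ?_, lr3 := ?_, lr4 := ?_ }
  · -- assoc1
    intro s t r hst htr
    exact gAssoc h hst htr
  · -- assoc2
    intro s t r hst hstr
    have hDst : P.D (P.cor s (P.plus t)) t := (D_iff h _ _).mpr (cor_D h (isP t) hst)
    have htr : P.coE t (P.plus r) := (h.wo5 _ t (P.plus r) (isP r) hDst).mp hstr
    exact ⟨htr, (gAssoc h hst htr).2.1, (gAssoc h hst htr).2.2⟩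
  · -- assoc3
    intro s t r htr hstr
    have hDtr : P.D (P.cor t (P.plus r)) r := (D_iff h _ _).mpr (cor_D h (isP r) htr)
    have hptr : P.plus (P.mul (P.cor t (P.plus r)) r) = P.plus (P.cor t (P.plus r)) :=
      plus_mul h hDtr
    have hgle : P.le (P.plus (P.cor t (P.plus r))) (P.plus t) :=
      h.wo2 _ _ (cor_le h (isP r) htr)
    have hsg : P.coE s (P.plus (P.cor t (P.plus r))) := by
      have := hstr
      show P.coE s (P.plus (P.cor t (P.plus r)))
      rw [← hptr]; exact this
    have hst : P.coE s (P.plus t) :=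
      (h.wo6 s (P.plus t) _ (isP t) (isP _) hgle).mpr hsg
    exact ⟨hst, (gAssoc h hst htr).1, (gAssoc h hst htr).2.2⟩
  · -- lr1
    intro x
    have hd : P.D (P.plus x) (P.plus x) := (D_iff h _ x).mp (dplus h x).1
    have hc := cor_of_D h (isP x) hd
    refine ⟨hc.1, ?_⟩
    show P.mul (P.cor (P.plus x) (P.plus x)) x = x
    rw [hc.2]; exact (dplus h x).2
  · -- lr2
    intro s t
    have hiff : P.coE (P.plus s) (P.plus (P.plus t)) ↔ P.coE (P.plus t) (P.plus (P.plus s)) := by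
      rw [plus_plus h t, plus_plus h s]
      exact ⟨fun hc => (coE_proj_symm h (isP s) (isP t) hc).1,
             fun hc => (coE_proj_symm h (isP t) (isP s) hc).1⟩
    refine ⟨hiff, ?_⟩
    intro hc
    have hc0 : P.coE (P.plus s) (P.plus (P.plus t)) := hc
    have hc' : P.coE (P.plus s) (P.plus t) := by rwa [plus_plus h t] at hc0
    have hc'' : P.coE (P.plus t) (P.plus s) := (coE_proj_symm h (isP s) (isP t) hc').1
    show P.mul (P.cor (P.plus s) (P.plus (P.plus t))) (P.plus t)
        = P.mul (P.cor (P.plus t) (P.plus (P.plus s))) (P.plus s)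
    rw [gmul_proj h (isP t) hc', gmul_proj h (isP s) hc'',
      (coE_proj_symm h (isP s) (isP t) hc').2]
  · -- lr3
    intro s t hd
    have hd' : P.coE (P.plus s) (P.plus t) := hd
    constructor
    · show P.coE (P.plus s) (P.plus (P.plus t))
      rwa [plus_plus h t]
    · show P.plus (P.mul (P.cor (P.plus s) (P.plus t)) t)
        = P.mul (P.cor (P.plus s) (P.plus (P.plus t))) (P.plus t)
      have hDt : P.D (P.cor (P.plus s) (P.plus t)) t :=
        (D_iff h _ _).mpr (cor_D h (isP t) hd')
      rw [plus_mul h hDt, gmul_proj h (isP t) hd',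
        plus_of_isPlus h (h.wo9b _ _ (isP s) (isP t) hd').1]
  · -- lr4
    intro s t hd
    have hd' : P.coE s (P.plus t) := hd
    have hDst : P.D (P.cor s (P.plus t)) t := (D_iff h _ _).mpr (cor_D h (isP t) hd')
    have hpst : P.plus (P.mul (P.cor s (P.plus t)) t) = P.plus (P.cor s (P.plus t)) :=
      plus_mul h hDst
    have hgle : P.le (P.plus (P.cor s (P.plus t))) (P.plus s) :=
      h.wo2 _ _ (cor_le h (isP t) hd')
    have hcp := cor_proj h (isP (P.cor s (P.plus t))) (isP s) hgle
    refine ⟨?_, ?_, ?_⟩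
    · show P.coE s (P.plus (P.plus t))
      rwa [plus_plus h t]
    · show P.coE (P.plus (P.mul (P.cor s (P.plus t)) t)) (P.plus s)
      rw [hpst]; exact hcp.1
    · show P.mul (P.cor s (P.plus (P.plus t))) (P.plus t)
        = P.mul (P.cor (P.plus (P.mul (P.cor s (P.plus t)) t)) (P.plus s)) s
      rw [hpst, gmul_proj h (isP t) hd', hcp.2.1, (mul_proj h (isP _) hgle).2]
      exact (cor_eq_res h (isP t) hd').2
end

section
/- The constructions C and G are mutually inverse on objects: for every left restriction semigroupoid (S,+), G(C(S)) = (S,+) as left restriction semigroupoids, and for every li-constellation (T,≤), C(G(T)) = (T,≤) as li-constellations. -/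
section Aux
variable {T : Type*} (P : PreConst T)

lemma plus_plus (hP : IsLiC P) (y : T) : P.plus (P.plus y) = P.plus y := by
  have he : P.isPlus (P.plus y) := ⟨y, rfl⟩
  have h1 := (hP.c3 (P.plus y) y he).mpr rfl
  have hDee : P.D (P.plus y) (P.plus y) :=
    ((hP.c1 (P.plus y) (P.plus y) y).mpr ⟨h1.1, by rw [h1.2]; exact h1.1⟩).1
  have hm := hP.c4 (P.plus y) (P.plus y) he hDee
  exact ((hP.c3 (P.plus y) (P.plus y) he).mp ⟨hDee, hm⟩).symm

lemma plus_of_isPlus (hP : IsLiC P) {e : T} (he : P.isPlus e) : P.plus e = e := by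
  obtain ⟨g, rfl⟩ := he; exact plus_plus P hP g

lemma plus_mul (hP : IsLiC P) {x y : T} (h : P.D x y) :
    P.plus (P.mul x y) = P.plus x := by
  have he : P.isPlus (P.plus x) := ⟨x, rfl⟩
  have h1 := (hP.c3 (P.plus x) x he).mpr rfl
  have hD2 : P.D (P.plus x) (P.mul x y) := ((hP.c1 (P.plus x) x y).mp ⟨h1.1, h⟩).2
  have hc2 := hP.c2 (P.plus x) x y h1.1 h
  have hm : P.mul (P.plus x) (P.mul x y) = P.mul x y := by rw [hc2.2, h1.2]
  exact ((hP.c3 (P.plus x) (P.mul x y) he).mp ⟨hD2, hm⟩).symm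

lemma D_plus (hP : IsLiC P) (x y : T) : P.D x y ↔ P.D x (P.plus y) := by
  have h1 := (hP.c3 (P.plus y) y ⟨y, rfl⟩).mpr rfl
  constructor
  · intro h
    exact ((hP.c1 x (P.plus y) y).mpr ⟨h1.1, by rw [h1.2]; exact h⟩).1
  · intro h
    have := ((hP.c1 x (P.plus y) y).mp ⟨h, h1.1⟩).2
    rwa [h1.2] at this

lemma cor_self (hP : IsLiC P) {x e : T} (he : P.isPlus e) (h : P.D x e) :
    P.coE x e ∧ P.cor x e = x := by
  have w := hP.wo4 x e he
  have hco : P.coE x e := w.1.mpr ⟨x, hP.le_refl x, h⟩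
  have hw := w.2 hco
  exact ⟨hco, hP.le_antisymm _ _ hw.1 (hw.2.2 x (hP.le_refl x) h)⟩

lemma res_plus (hP : IsLiC P) {e f : T} (he : P.isPlus e) (hf : P.isPlus f)
    (h : P.le e f) : P.res e f = e := by
  have h' : P.le e (P.plus f) := by rw [plus_of_isPlus P hP hf]; exact h
  have w := hP.wo3 e f he h'
  exact (w.2.2 e h (plus_of_isPlus P hP he)).symm

lemma key_lemma (hP : IsLiC P) {e x : T} (he : P.isPlus e) (h : P.le e (P.plus x)) :
    P.coE e (P.plus x) ∧ P.cor e (P.plus x) = e ∧ P.D e x ∧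
      P.le (P.mul e x) x ∧ P.mul e x = P.res e x := by
  have hpx : P.isPlus (P.plus x) := ⟨x, rfl⟩
  have w8 := hP.wo8 e (P.plus x) he hpx h
  have hcor : P.cor e (P.plus x) = e := by rw [w8.2, res_plus P hP he hpx h]
  have w4 := (hP.wo4 e (P.plus x) hpx).2 w8.1
  have hDe : P.D e (P.plus x) := by rw [← hcor]; exact w4.2.1
  have hDex : P.D e x := (D_plus P hP e x).mpr hDe
  have h1 := (hP.c3 (P.plus x) x hpx).mpr rfl
  have hle : P.le (P.mul e x) x := by
    have := hP.wo1 e (P.plus x) x x h (hP.le_refl x) hDex h1.1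
    rwa [h1.2] at this
  have hplus : P.plus (P.mul e x) = e := by
    rw [plus_mul P hP hDex, plus_of_isPlus P hP he]
  exact ⟨w8.1, hcor, hDex, hle, ((hP.wo3 e x he h).2.2 _ hle hplus)⟩

end Aux

/-- `C` and `G` are mutually inverse on objects: `G(C(S)) = (S,+)` as left
restriction semigroupoids and `C(G(T)) = (T,≤)` as li-constellations
(the partial structures agree wherever they are defined). -/
theorem stmt14 {S T : Type*} (A : PreSgpd S) (hA : IsLRS A)
    (P : PreConst T) (hP : IsLiC P) :
    ((GofT (CofS A)).plus = A.plus ∧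
     (∀ s t, (GofT (CofS A)).D s t ↔ A.D s t) ∧
     (∀ s t, A.D s t → (GofT (CofS A)).mul s t = A.mul s t)) ∧
    ((CofS (GofT P)).plus = P.plus ∧
     (∀ x y, (CofS (GofT P)).D x y ↔ P.D x y) ∧
     (∀ x y, P.D x y → (CofS (GofT P)).mul x y = P.mul x y) ∧
     (∀ x y, (CofS (GofT P)).le x y ↔ P.le x y) ∧
     (∀ x e, P.isPlus e → ((CofS (GofT P)).coE x e ↔ P.coE x e)) ∧
     (∀ x e, P.isPlus e → P.coE x e → (CofS (GofT P)).cor x e = P.cor x e) ∧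
     (∀ e x, P.isPlus e → P.le e (P.plus x) →
       (CofS (GofT P)).res e x = P.res e x)) := by
  constructor
  · refine ⟨rfl, ?_, ?_⟩
    · intro s t
      show A.D s (A.plus t) ↔ A.D s t
      constructor
      · intro h
        have l1 := hA.lr1 t
        have := (hA.assoc1 s (A.plus t) t h l1.1).2.1
        rwa [l1.2] at this
      · intro h
        exact (hA.lr4 s t h).1
    · intro s t h
      show A.mul (A.mul s (A.plus t)) t = A.mul s t
      have l1 := hA.lr1 t
      have hD := (hA.lr4 s t h).1
      rw [(hA.assoc1 s (A.plus t) t hD l1.1).2.2, l1.2]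
  · refine ⟨rfl, ?_, ?_, ?_, ?_, ?_, ?_⟩
    · intro x y
      show (P.coE x (P.plus (P.plus y)) ∧
        P.mul (P.cor x (P.plus (P.plus y))) (P.plus y) = x) ↔ P.D x y
      rw [plus_plus P hP y]
      constructor
      · rintro ⟨hc, heq⟩
        have w4 := (hP.wo4 x (P.plus y) ⟨y, rfl⟩).2 hc
        have hcc := hP.c4 (P.plus y) (P.cor x (P.plus y)) ⟨y, rfl⟩ w4.2.1
        rw [hcc] at heq
        have hD : P.D x (P.plus y) := by rw [← heq]; exact w4.2.1
        exact (D_plus P hP x y).mpr hD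
      · intro h
        have hD' := (D_plus P hP x y).mp h
        obtain ⟨hc, heq⟩ := cor_self P hP ⟨y, rfl⟩ hD'
        exact ⟨hc, by rw [heq]; exact hP.c4 (P.plus y) x ⟨y, rfl⟩ hD'⟩
    · intro x y h
      show P.mul (P.cor x (P.plus y)) y = P.mul x y
      rw [(cor_self P hP ⟨y, rfl⟩ ((D_plus P hP x y).mp h)).2]
    · intro x y
      show (P.coE (P.plus x) (P.plus y) ∧
        P.mul (P.cor (P.plus x) (P.plus y)) y = x) ↔ P.le x y
      constructor
      · rintro ⟨hc, heq⟩
        have w9 := hP.wo9b (P.plus x) (P.plus y) ⟨x, rfl⟩ ⟨y, rfl⟩ hc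
        have hk := key_lemma P hP w9.1 w9.2.2.1
        rw [← heq]
        exact hk.2.2.2.1
      · intro h
        have hw2 := hP.wo2 x y h
        have hk := key_lemma P hP ⟨x, rfl⟩ hw2
        refine ⟨hk.1, ?_⟩
        rw [hk.2.1, hk.2.2.2.2]
        exact ((hP.wo3 (P.plus x) y ⟨x, rfl⟩ hw2).2.2 x h rfl).symm
    · intro x e he
      show P.coE x (P.plus e) ↔ P.coE x e
      rw [plus_of_isPlus P hP he]
    · intro x e he hco
      show P.mul (P.cor x (P.plus e)) e = P.cor x e
      rw [plus_of_isPlus P hP he]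
      exact hP.c4 e (P.cor x e) he ((hP.wo4 x e he).2 hco).2.1
    · intro e x he h
      show P.mul (P.cor e (P.plus x)) x = P.res e x
      have hk := key_lemma P hP he h
      rw [hk.2.1, hk.2.2.2.2]
end

section
/- If φ : S → S' is a restriction morphism between left restriction semigroupoids, then the same function φ : C(S) → C(S') is an inductive radiant between the associated li-constellations. -/
/-- A restriction morphism of left restriction semigroupoids. -/
def IsRM {S₁ S₂ : Type*} (A : PreSgpd S₁) (B : PreSgpd S₂) (φ : S₁ → S₂) : Prop :=
  (∀ s t, A.D s t → B.D (φ s) (φ t) ∧ φ (A.mul s t) = B.mul (φ s) (φ t)) ∧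
  (∀ s, φ (A.plus s) = B.plus (φ s))

/-- An inductive radiant between li-constellations: conditions (ir1)-(ir4). -/
def IsRadiant {T L : Type*} (P : PreConst T) (Q : PreConst L) (φ : T → L) : Prop :=
  (∀ x y, P.D x y → Q.D (φ x) (φ y) ∧ φ (P.mul x y) = Q.mul (φ x) (φ y)) ∧
  (∀ x, Q.plus (φ x) = φ (P.plus x)) ∧
  (∀ x y, P.le x y → Q.le (φ x) (φ y)) ∧
  (∀ x e, P.isPlus e → P.coE x e →
    Q.coE (φ x) (φ e) ∧ φ (P.cor x e) = Q.cor (φ x) (φ e))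

/-- If `φ : S → S'` is a restriction morphism, then the same function is an
inductive radiant `C(S) → C(S')` between the associated li-constellations. -/
theorem stmt15 {S₁ S₂ : Type*} (A : PreSgpd S₁) (B : PreSgpd S₂)
    (hA : IsLRS A) (hB : IsLRS B) (φ : S₁ → S₂) (hφ : IsRM A B φ) :
    IsRadiant (CofS A) (CofS B) φ := by
  obtain ⟨hm, hp⟩ := hφ
  refine ⟨?_, ?_, ?_, ?_⟩
  · rintro x y ⟨hD, hEq⟩
    have h1 := (hA.lr1 y).1
    have h2 := (hA.lr1 y).2
    obtain ⟨hD', hD'', hassoc⟩ := hA.assoc1 x (A.plus y) y hD h1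
    rw [hEq] at hD' hassoc
    rw [h2] at hD'' hassoc
    -- now hD' : A.D x y
    have hmxy := hm x y hD'
    have hmxp := hm x (A.plus y) hD
    constructor
    · constructor
      · have := hmxp.1
        rwa [hp y] at this
      · have := hmxp.2
        rw [hEq] at this
        rw [hp y] at this
        exact this.symm
    · exact hmxy.2
  · intro x; exact (hp x).symm
  · rintro x y ⟨hD, hEq⟩
    have h := hm (A.plus x) y hD
    constructor
    · have := h.1; rwa [hp x] at this
    · have := h.2; rw [hEq] at this; rw [hp x] at this; exact this.symm
  · rintro x e _ hcoE
    exact ⟨(hm x e hcoE).1, (hm x e hcoE).2⟩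
end

section
/- The Szendrei expansion Sz(T) of an li-constellation T is generated by the image ι(T) of the canonical map ι(x) = ({x⁺,x},x) under composition, the unary operation +, and corestriction: every (A,a) ∈ Sz(T) can be written as (ι(a₁)⁺|⋯|ι(aₙ)⁺)ι(a) where A = {a⁺, a₁, …, aₙ}. -/
/-- The Szendrei expansion of an li-constellation, realized on `Finset T × T`:
an element `(A, a)` (meaningful when `a ∈ A`, `a⁺ ∈ A` and `b⁺ = a⁺`
for all `b ∈ A`) with operation `(A,a)(B,b) = (A, ab)` when `ab` is defined,
`(A,a)⁺ = (A, a⁺)`, order `(A,a) ≤ (B,b)` iff `a ≤ b` and `a⁺B ⊆ A`,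
restriction `(E,e)|(A,a) = (E, e|a)`, and corestriction
`(A,a)|(E,e) = ((a|e)⁺A ∪ (a|e)E, a|e)` (existing iff `a|e` exists). -/
def SzC {T : Type*} [DecidableEq T] (P : PreConst T) : PreConst (Finset T × T) where
  D p q := P.D p.2 q.2
  mul p q := (p.1, P.mul p.2 q.2)
  plus p := (p.1, P.plus p.2)
  le p q := P.le p.2 q.2 ∧ q.1.image (fun b => P.mul (P.plus p.2) b) ⊆ p.1
  res p q := (p.1, P.res p.2 q.2)
  coE p q := P.coE p.2 q.2
  cor p q := (p.1.image (fun b => P.mul (P.plus (P.cor p.2 q.2)) b) ∪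
              q.1.image (fun b => P.mul (P.cor p.2 q.2) b), P.cor p.2 q.2)

/-- The canonical map `ι : T → Sz(T)`, `ι(x) = ({x⁺, x}, x)`. -/
def iotaSz {T : Type*} [DecidableEq T] (P : PreConst T) (x : T) : Finset T × T :=
  ({P.plus x, x}, x)

/-! Every element of `Sz(T)` lies over an identity `e = a⁺` and all of its labels lie in
the fibre `{b | b⁺ = e}`, on which left multiplication by `e` is the identity. Since
`e|e = e`, corestricting `(S, e)` by `ι(b)⁺ = ({e, b}, e)` just adds `b` to `S`; so folding
the corestrictions over the elements of `A`, starting from `ι(e)⁺ = ({e}, e)`, produces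
`(A, e)`, and `(A, e) ι(a) = (A, a)`. -/

namespace IsConst

variable {T : Type*} {P : PreConst T}

theorem mul_plus_self (hP : IsConst P) (x : T) :
    P.D (P.plus x) x ∧ P.mul (P.plus x) x = x :=
  (hP.c3 _ x ⟨x, rfl⟩).mpr rfl

theorem mul_of_plus_eq (hP : IsConst P) {e x : T} (he : P.isPlus e) (hx : P.plus x = e) :
    P.mul e x = x :=
  ((hP.c3 e x he).mpr hx.symm).2

theorem D_plus_plus (hP : IsConst P) (x : T) : P.D (P.plus x) (P.plus x) := by
  obtain ⟨hD, hmul⟩ := hP.mul_plus_self x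
  exact ((hP.c1 _ _ x).mpr ⟨hD, by rw [hmul]; exact hD⟩).1

theorem plus_of_isPlus (hP : IsConst P) {e : T} (he : P.isPlus e) : P.plus e = e := by
  obtain ⟨x, rfl⟩ := he
  have hD := hP.D_plus_plus x
  exact ((hP.c3 _ _ ⟨x, rfl⟩).mp ⟨hD, hP.c4 _ _ ⟨x, rfl⟩ hD⟩).symm

theorem image_mul_of_plus_eq [DecidableEq T] (hP : IsConst P) {e : T} (he : P.isPlus e)
    {S : Finset T} (hS : ∀ s ∈ S, P.plus s = e) : S.image (P.mul e) = S := by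
  rw [Finset.image_congr fun s hs => hP.mul_of_plus_eq he (hS s hs), Finset.image_id']

end IsConst

theorem IsLiC.cor_self_of_isPlus {T : Type*} {P : PreConst T} (hP : IsLiC P) {e : T}
    (he : P.isPlus e) : P.cor e e = e := by
  have hee : P.le e (P.plus e) := by rw [hP.plus_of_isPlus he]; exact hP.le_refl e
  rw [(hP.wo8 e e he he (hP.le_refl e)).2]
  exact ((hP.wo3 e e he hee).2.2 e (hP.le_refl e) (hP.plus_of_isPlus he)).symm

namespace SzC

variable {T : Type*} [DecidableEq T] {P : PreConst T}

theorem cor_plus_iotaSz (hP : IsLiC P) {e b : T} {S : Finset T} (he : P.isPlus e)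
    (heS : e ∈ S) (hS : ∀ s ∈ S, P.plus s = e) (hb : P.plus b = e) :
    (SzC P).cor (S, e) ((SzC P).plus (iotaSz P b)) = (insert b S, e) := by
  have hpair : ∀ s ∈ ({e, b} : Finset T), P.plus s = e := by
    simpa [hb] using hP.plus_of_isPlus he
  simp only [SzC, iotaSz, hb, hP.cor_self_of_isPlus he, hP.plus_of_isPlus he,
    hP.image_mul_of_plus_eq he hS, hP.image_mul_of_plus_eq he hpair]
  rw [Finset.union_insert, Finset.insert_eq_of_mem (Finset.mem_union_left _ heS),
    Finset.union_singleton]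

theorem foldl_cor_plus_iotaSz (hP : IsLiC P) {e : T} (he : P.isPlus e) (l : List T)
    (hl : ∀ b ∈ l, P.plus b = e) {S : Finset T} (heS : e ∈ S) (hS : ∀ s ∈ S, P.plus s = e) :
    l.foldl (fun acc b => (SzC P).cor acc ((SzC P).plus (iotaSz P b))) (S, e)
      = (S ∪ l.toFinset, e) := by
  induction l generalizing S with
  | nil => simp
  | cons b l ih =>
    have hb := hl b List.mem_cons_self
    rw [List.foldl_cons, cor_plus_iotaSz hP he heS hS hb,
      ih (fun c hc => hl c (List.mem_cons_of_mem b hc)) (Finset.mem_insert_of_mem heS)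
        (Finset.forall_mem_insert _ _ _ |>.mpr ⟨hb, hS⟩)]
    simp [Finset.insert_union, Finset.union_insert]

end SzC

theorem stmt17_general {T : Type*} [DecidableEq T] (P : PreConst T) (h : IsLiC P)
    (A : Finset T) (a : T) (hpa : P.plus a ∈ A)
    (hall : ∀ b ∈ A, P.plus b = P.plus a) :
    ∃ (c : T) (l : List T), insert (P.plus a) (c :: l).toFinset = A ∧
      (A, a) = (SzC P).mul
        (List.foldl (fun acc b => (SzC P).cor acc ((SzC P).plus (iotaSz P b)))
          ((SzC P).plus (iotaSz P c)) l)
        (iotaSz P a) := by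
  set e := P.plus a
  have he : P.isPlus e := ⟨a, rfl⟩
  have hstart : (SzC P).plus (iotaSz P e) = ({e}, e) := by
    simp [SzC, iotaSz, h.plus_of_isPlus he]
  refine ⟨e, A.toList, by simpa using hpa, ?_⟩
  rw [hstart, SzC.foldl_cor_plus_iotaSz h he A.toList (by simpa using hall)
    (Finset.mem_singleton_self e) (by simpa using h.plus_of_isPlus he),
    Finset.toList_toFinset, Finset.singleton_union, Finset.insert_eq_of_mem hpa]
  exact Prod.ext rfl (h.mul_plus_self a).2.symm

/-- The Szendrei expansion `Sz(T)` is generated by `ι(T)` under composition, `+`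
and corestriction: every `(A, a) ∈ Sz(T)` can be written as
`(ι(a₁)⁺|⋯|ι(aₙ)⁺)ι(a)` where `A = {a⁺, a₁, …, aₙ}`. -/
theorem stmt17 {T : Type*} [DecidableEq T] (P : PreConst T) (h : IsLiC P)
    (A : Finset T) (a : T) (ha : a ∈ A) (hpa : P.plus a ∈ A)
    (hall : ∀ b ∈ A, P.plus b = P.plus a) :
    ∃ (c : T) (l : List T), insert (P.plus a) (c :: l).toFinset = A ∧
      (A, a) = (SzC P).mul
        (List.foldl (fun acc b => (SzC P).cor acc ((SzC P).plus (iotaSz P b)))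
          ((SzC P).plus (iotaSz P c)) l)
        (iotaSz P a) :=
  stmt17_general P h A a hpa hall
end
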